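/- Let 𝒢_k be the quotient of the group algebra ℚ[G̃_m] by the two-sided ideal generated by all products ∏_{j=1}^{k+1}((a'_{n_j})² - 1) for arbitrary tuples (n_1, …, n_{k+1}) with each n_j ∈ {0, …, m-1}. Then in 𝒢_k, every element of the form α_1·A_1·α_2·A_2···α_{k+1}·A_{k+1}·α_{k+2} is zero, where each α_t ∈ G̃_m and each A_t = (u_t - u_t⁻¹) with u_t one of the generators a'_i or a''_i (i < m). -/

import Mathlib

open FreeGroup

/-- Generators of the groups `G_m` and `G̃_m`: `.inl (i, false)` is `a'_i`,
`.inl (i, true)` is `a''_i`, and `.inr ()` is `a_m`. -/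
abbrev Gen (m : ℕ) := (Fin m × Bool) ⊕ Unit

/-- The defining relators of the group `G̃_m`. -/
def Gt.rels (m : ℕ) : Set (FreeGroup (Gen m)) :=
  {w | w = of (.inr ()) * of (.inr ())
    ∨ (∃ i : Fin m, w = (of (.inl (i, false)))^2 * ((of (.inl (i, true)))^2)⁻¹)
    ∨ (∃ i j : Fin m, i < j ∧
        (w = of (.inl (i, false)) * of (.inl (j, false)) *
             (of (.inl (j, false)) * of (.inl (i, true)))⁻¹
       ∨ w = of (.inl (i, false)) * of (.inl (j, true)) *
             (of (.inl (j, true)) * of (.inl (i, true)))⁻¹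
       ∨ w = of (.inl (j, false)) * of (.inl (i, false)) *
             (of (.inl (i, true)) * of (.inl (j, false)))⁻¹
       ∨ w = of (.inl (j, true)) * of (.inl (i, false)) *
             (of (.inl (i, true)) * of (.inl (j, true)))⁻¹))
    ∨ (∃ i : Fin m, w = of (.inl (i, false)) * of (.inr ()) *
             (of (.inr ()) * of (.inl (i, true)))⁻¹)}

/-- The group `G̃_m`. -/
abbrev Gt (m : ℕ) := PresentedGroup (Gt.rels m)

def Gt.a' {m : ℕ} (i : Fin m) : Gt m := PresentedGroup.of (.inl (i, false))
def Gt.a'' {m : ℕ} (i : Fin m) : Gt m := PresentedGroup.of (.inl (i, true))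
def Gt.am (m : ℕ) : Gt m := PresentedGroup.of (.inr ())

/-- The canonical embedding of `G̃_m` into its rational group algebra. -/
noncomputable def ι (m : ℕ) : Gt m →* MonoidAlgebra ℚ (Gt m) :=
  (MonoidAlgebra.of ℚ (Gt m))

/-- The generator of `G̃_m` corresponding to `a'_i` (`snd = false`) or
`a''_i` (`snd = true`). -/
def gen {m : ℕ} (g : Fin m × Bool) : Gt m := PresentedGroup.of (.inl g)

/-- The element `u - u⁻¹` of `ℚ[G̃_m]` for a generator `u = a'_i` or `a''_i`. -/
noncomputable def D {m : ℕ} (g : Fin m × Bool) : MonoidAlgebra ℚ (Gt m) :=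
  ι m (gen g) - ι m (gen g)⁻¹

/-- The generating set of the two-sided ideal defining the quotient `𝒢_k`:
all products `∏_{j=1}^{k+1} ((a'_{n_j})² - 1)`. -/
noncomputable def idealGens (m k : ℕ) : Set (MonoidAlgebra ℚ (Gt m)) :=
  {x | ∃ n : Fin (k + 1) → Fin m,
    x = (List.ofFn fun j : Fin (k + 1) => ι m (gen (n j, false)) ^ 2 - 1).prod}

/-! The square `(a'_i)²` is central in `G̃_m`, so each factor `u - u⁻¹ = u⁻¹ ((a'_i)² - 1)`
of the product contributes a central element `(a'_i)² - 1` of `ℚ[G̃_m]`. Moving all of them to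
the right leaves a group element times one of the generators
`∏_{j=1}^{k+1} ((a'_{n_j})² - 1)` of the ideal. -/

theorem PresentedGroup.commute_of_forall_commute_of {α : Type*} {rels : Set (FreeGroup α)}
    {z : PresentedGroup rels} (h : ∀ x, Commute z (PresentedGroup.of x))
    (g : PresentedGroup rels) : Commute z g :=
  Commute.symm <| Subgroup.mem_centralizer_singleton_iff.mp <|
    PresentedGroup.generated_by rels (Subgroup.centralizer {z})
      (fun x => Subgroup.mem_centralizer_singleton_iff.mpr (h x).symm) g

theorem sub_eq_mul_sq_sub_one {R : Type*} [Ring R] {a b : R} (h : b * a = 1) :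
    a - b = b * (a ^ 2 - 1) := by
  rw [mul_sub, sq, ← mul_assoc, h, one_mul, mul_one]

theorem List.prod_ofFn_mul_of_commute {R : Type*} [Monoid R] {n : ℕ} (f g : Fin n → R)
    (hg : ∀ t y, Commute (g t) y) :
    (List.ofFn fun t => f t * g t).prod = (List.ofFn f).prod * (List.ofFn g).prod := by
  induction n with
  | zero => simp
  | succ n ih =>
    simp only [List.ofFn_succ, List.prod_cons]
    rw [ih _ _ fun t => hg t.succ, mul_assoc, mul_assoc, (hg 0 _).left_comm]

namespace Gt

variable {m : ℕ}

theorem mk_eq_mk_of_mul_inv_mem_rels {a b : FreeGroup (Gen m)} (h : a * b⁻¹ ∈ Gt.rels m) :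
    PresentedGroup.mk (Gt.rels m) a = PresentedGroup.mk (Gt.rels m) b := by
  rw [← mul_inv_eq_one, ← _root_.map_inv, ← _root_.map_mul]
  exact (QuotientGroup.eq_one_iff _).mpr (Subgroup.subset_normalClosure h)

theorem gen_sq (i : Fin m) (b : Bool) : gen (i, b) ^ 2 = gen (i, false) ^ 2 := by
  cases b
  · rfl
  · exact (mk_eq_mk_of_mul_inv_mem_rels (Or.inr (Or.inl ⟨i, rfl⟩))).symm

theorem semiconjBy_gen_of_lt {i j : Fin m} (hij : i < j) (b : Bool) :
    SemiconjBy (gen (j, b)) (gen (i, true)) (gen (i, false)) := by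
  cases b
  · exact (mk_eq_mk_of_mul_inv_mem_rels (Or.inr (Or.inr (Or.inl ⟨i, j, hij, Or.inl rfl⟩)))).symm
  · exact (mk_eq_mk_of_mul_inv_mem_rels
      (Or.inr (Or.inr (Or.inl ⟨i, j, hij, Or.inr (Or.inl rfl)⟩)))).symm

theorem semiconjBy_gen_of_gt {i j : Fin m} (hji : j < i) (b : Bool) :
    SemiconjBy (gen (i, false)) (gen (j, b)) (gen (j, !b)) := by
  cases b
  · exact mk_eq_mk_of_mul_inv_mem_rels
      (Or.inr (Or.inr (Or.inl ⟨j, i, hji, Or.inr (Or.inr (Or.inl rfl))⟩)))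
  · exact semiconjBy_gen_of_lt hji false

theorem semiconjBy_am (i : Fin m) : SemiconjBy (Gt.am m) (gen (i, true)) (gen (i, false)) :=
  (mk_eq_mk_of_mul_inv_mem_rels (Or.inr (Or.inr (Or.inr ⟨i, rfl⟩)))).symm

theorem commute_gen_sq_of (i : Fin m) (x : Gen m) :
    Commute (gen (i, false) ^ 2) (PresentedGroup.of x) := by
  rcases x with ⟨j, b⟩ | ⟨⟩
  · change Commute _ (gen (j, b))
    rcases lt_trichotomy i j with hij | rfl | hji
    · -- `a'_i` and `a''_i` are conjugate by `gen (j, b)` and have the same square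
      have h := (semiconjBy_gen_of_lt hij b).pow_right 2
      rw [gen_sq] at h
      exact Commute.symm h
    · rw [← gen_sq i b]
      exact Commute.pow_left (Commute.refl _) 2
    · -- conjugation by `a'_i` swaps `a'_j` and `a''_j`
      have h := semiconjBy_gen_of_gt hji b
      have h' := semiconjBy_gen_of_gt hji (!b)
      rw [Bool.not_not] at h'
      exact sq (gen (i, false)) ▸ h'.mul_left h
  · have h := (semiconjBy_am i).pow_right 2
    rw [gen_sq] at h
    exact Commute.symm h

theorem commute_gen_sq (i : Fin m) (g : Gt m) : Commute (gen (i, false) ^ 2) g :=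
  PresentedGroup.commute_of_forall_commute_of (commute_gen_sq_of i) g

theorem commute_ι_gen_sq_sub_one (i : Fin m) (y : MonoidAlgebra ℚ (Gt m)) :
    Commute (ι m (gen (i, false)) ^ 2 - 1) y := by
  rw [← _root_.map_pow]
  exact (MonoidAlgebra.of_commute (commute_gen_sq i) y).sub_left (Commute.one_left y)

theorem D_eq_inv_mul (g : Fin m × Bool) : D g = ι m (gen g)⁻¹ * (ι m (gen (g.1, false)) ^ 2 - 1) := by
  rw [D, ← _root_.map_pow, ← gen_sq g.1 g.2, _root_.map_pow]
  exact sub_eq_mul_sq_sub_one (by rw [← _root_.map_mul, inv_mul_cancel, _root_.map_one])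

end Gt

/-- In the quotient `𝒢_k` of `ℚ[G̃_m]` by the two-sided ideal generated by the
products `∏_{j=1}^{k+1}((a'_{n_j})² - 1)`, every element of the form
`α_1·A_1·α_2·A_2 ··· α_{k+1}·A_{k+1}·α_{k+2}` with `α_t ∈ G̃_m` and
`A_t = u_t - u_t⁻¹` (`u_t` a generator `a'_i` or `a''_i`) vanishes; i.e. every
such element of `ℚ[G̃_m]` lies in the ideal. -/
theorem stmt_11 (m k : ℕ) (α : Fin (k + 2) → Gt m)
    (u : Fin (k + 1) → Fin m × Bool) :
    (List.ofFn fun t : Fin (k + 1) =>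
        ι m (α t.castSucc) * D (u t)).prod * ι m (α (Fin.last (k + 1))) ∈
      TwoSidedIdeal.span (idealGens m k) := by
  simp_rw [Gt.D_eq_inv_mul, ← mul_assoc, ← _root_.map_mul]
  rw [List.prod_ofFn_mul_of_commute _ _ fun t => Gt.commute_ι_gen_sq_sub_one (u t).1]
  exact TwoSidedIdeal.mul_mem_right _ _ _ (TwoSidedIdeal.mul_mem_left _ _ _
    (TwoSidedIdeal.subset_span ⟨fun t => (u t).1, rfl⟩))
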